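/- Let E(τ) be a locally solid vector lattice whose order intervals are τ-complete. If E has the b-property in its topological completion Ê(τ̂), then E is topologically complete, i.e., E = Ê. -/

import Mathlib

/-!
Given `0 ≤ g ∈ Ê`, the b-property bounds the set `{x ∈ E⁺ | x ≤ g}` by some `e ∈ E`. Pulling a
net of `E` converging to `g` into `[0, e]` by the truncation `x ↦ (x ⊔ 0) ⊓ e`, which is
contractive for `|·|`, gives a net converging to `g ⊓ e` in the locally solid `Ê`, hence a Cauchy
net in `[0, e]`; by completeness of `[0, e]` we get `g ⊓ e ∈ E`. If `g ⊓ e < g`, order density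
produces `0 < z ∈ E` with `g ⊓ e + z ≤ g`; then also `g ⊓ e + z ≤ e` by the choice of `e`, so
`g ⊓ e + z ≤ g ⊓ e`, which is absurd. Thus `E⁺ = Ê⁺`, and `E = Ê` follows from `g = g⁺ - g⁻`.
-/

universe u

open Filter Topology Set Function

def IsLocallySolid (G : Type*) [AddCommGroup G] [Lattice G] [TopologicalSpace G] : Prop :=
  ∀ s ∈ 𝓝 (0 : G), ∃ t ∈ 𝓝 (0 : G), t ⊆ s ∧ ∀ x y : G, |x| ≤ |y| → y ∈ t → x ∈ t

def HasBProperty {E : Type u} {G : Type*} [Zero E] [Preorder E] [Preorder G] (J : E → G) :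
    Prop :=
  ∀ (ι : Type u) [Preorder ι] [Nonempty ι] [IsDirected ι (· ≤ ·)] (x : ι → E),
    (∀ i, 0 ≤ x i) → Monotone x → (∃ g : G, ∀ i, J (x i) ≤ g) → ∃ e : E, ∀ i, x i ≤ e

theorem abs_sup_inf_sub_sup_inf_le {G : Type*} [AddCommGroup G] [Lattice G] [AddLeftMono G]
    (x y a b : G) : |(x ⊔ a) ⊓ b - (y ⊔ a) ⊓ b| ≤ |x - y| :=
  (abs_inf_sub_inf_le_abs _ _ _).trans (abs_sup_sub_sup_le_abs _ _ _)

theorem map_inf_of_map_sup {E G F : Type*} [AddCommGroup E] [Lattice E] [AddLeftMono E]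
    [AddCommGroup G] [Lattice G] [AddLeftMono G] [FunLike F E G] [AddMonoidHomClass F E G]
    {J : F} (hJ : ∀ x y, J (x ⊔ y) = J x ⊔ J y) (x y : E) : J (x ⊓ y) = J x ⊓ J y := by
  rw [← add_left_inj (J (x ⊔ y)), ← map_add, inf_add_sup, map_add, hJ, inf_add_sup]

theorem map_le_map_iff_of_map_sup {E G F : Type*} [Lattice E] [Lattice G] [FunLike F E G]
    {J : F} (hJ : ∀ x y, J (x ⊔ y) = J x ⊔ J y) (hinj : Injective J) {x y : E} :
    J x ≤ J y ↔ x ≤ y := by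
  rw [← sup_eq_right, ← hJ, hinj.eq_iff, sup_eq_right]

theorem surjective_of_forall_nonneg_mem_range {E G F : Type*} [AddCommGroup E] [AddCommGroup G]
    [Lattice G] [AddLeftMono G] [FunLike F E G] [AddMonoidHomClass F E G] {J : F}
    (hJ : ∀ g : G, 0 ≤ g → g ∈ range J) : Surjective J := by
  intro g
  obtain ⟨y₁, hy₁⟩ := hJ g⁺ (posPart_nonneg g)
  obtain ⟨y₂, hy₂⟩ := hJ g⁻ (negPart_nonneg g)
  exact ⟨y₁ - y₂, by rw [map_sub, hy₁, hy₂, posPart_sub_negPart]⟩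

theorem IsLocallySolid.tendsto_of_abs_sub_le {G : Type*} [AddCommGroup G] [Lattice G]
    [UniformSpace G] [IsUniformAddGroup G] (hG : IsLocallySolid G)
    {α : Type*} {l : Filter α} {u v : α → G} {a b : G}
    (hu : Tendsto u l (𝓝 a)) (huv : ∀ x, |v x - b| ≤ |u x - a|) : Tendsto v l (𝓝 b) := by
  rw [← tendsto_sub_nhds_zero_iff] at hu ⊢
  intro s hs
  obtain ⟨t, ht, hts, hsolid⟩ := hG s hs
  rw [mem_map]
  filter_upwards [hu ht] with x hx
  exact hts (hsolid _ _ (huv x) hx)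

theorem HasBProperty.exists_forall_le {E : Type u} {G F : Type*} [AddCommGroup E] [Lattice E]
    [AddCommGroup G] [Lattice G] [FunLike F E G] [AddMonoidHomClass F E G] {J : F}
    (hb : HasBProperty J) (hJ : ∀ x y, J (x ⊔ y) = J x ⊔ J y) {g : G} (hg : 0 ≤ g) :
    ∃ e : E, ∀ x, 0 ≤ x → J x ≤ g → x ≤ e := by
  let D := {x : E // 0 ≤ x ∧ J x ≤ g}
  have : Nonempty D := ⟨⟨0, le_rfl, by rwa [map_zero]⟩⟩
  have : IsDirected D (· ≤ ·) := ⟨fun a b =>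
    ⟨⟨a.1 ⊔ b.1, le_sup_of_le_left a.2.1, by rw [hJ]; exact sup_le a.2.2 b.2.2⟩,
      le_sup_left, le_sup_right⟩⟩
  obtain ⟨e, he⟩ := hb D Subtype.val (fun x => x.2.1) (fun _ _ h => h) ⟨g, fun x => x.2.2⟩
  exact ⟨e, fun x hx0 hxg => he ⟨x, hx0, hxg⟩⟩

theorem exists_mem_Icc_map_eq_sup_inf {E G F : Type*} [AddCommGroup E] [Lattice E]
    [AddLeftMono E] [UniformSpace E] [IsUniformAddGroup E]
    [AddCommGroup G] [Lattice G] [AddLeftMono G] [UniformSpace G] [IsUniformAddGroup G]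
    [T2Space G] [FunLike F E G] [AddMonoidHomClass F E G] (hG : IsLocallySolid G) {J : F}
    (hJlat : ∀ x y, J (x ⊔ y) = J x ⊔ J y) (hJ : IsUniformInducing J) (hdense : DenseRange J)
    {a b : E} (hab : a ≤ b) (hint : IsComplete (Icc a b)) (g : G) :
    ∃ y ∈ Icc a b, J y = (g ⊔ J a) ⊓ J b := by
  let t : E → E := fun x => (x ⊔ a) ⊓ b
  let l := comap J (𝓝 g)
  have : l.NeBot := (hJ.isDenseInducing hdense).comap_nhds_neBot g
  have hlim : Tendsto (J ∘ t) l (𝓝 ((g ⊔ J a) ⊓ J b)) :=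
    hG.tendsto_of_abs_sub_le tendsto_comap fun x => by
      simp only [comp_apply, t, map_inf_of_map_sup hJlat, hJlat]
      exact abs_sup_inf_sub_sup_inf_le _ _ _ _
  have hcauchy : Cauchy (map t l) := by
    rw [← hJ.cauchy_map_iff, map_map]
    exact hlim.cauchy_map
  have hmem : map t l ≤ 𝓟 (Icc a b) :=
    le_principal_iff.2 <| mem_map.2 <| univ_mem' fun _ => ⟨le_inf le_sup_right hab, inf_le_right⟩
  obtain ⟨y, hy, hly⟩ := hint _ hcauchy hmem
  exact ⟨y, hy, tendsto_nhds_unique ((hJ.uniformContinuous.continuous.tendsto y).comp hly)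
    (tendsto_map'_iff.2 hlim)⟩

theorem map_eq_of_map_eq_inf_of_forall_le {E G F : Type*} [AddCommGroup E] [Lattice E]
    [AddLeftMono E] [AddCommGroup G] [Lattice G] [AddLeftMono G]
    [FunLike F E G] [AddMonoidHomClass F E G] {J : F}
    (hJlat : ∀ x y, J (x ⊔ y) = J x ⊔ J y) (hinj : Injective J)
    (horder : ∀ g : G, 0 < g → ∃ x : E, 0 < J x ∧ J x ≤ g)
    {g : G} {e y : E} (hy0 : 0 ≤ y) (hy : J y = g ⊓ J e)
    (he : ∀ x, 0 ≤ x → J x ≤ g → x ≤ e) : J y = g := by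
  have hyg : J y ≤ g := hy.trans_le inf_le_left
  by_contra hne
  obtain ⟨z, hz, hzg⟩ := horder _ (sub_pos.2 (hyg.lt_of_ne hne))
  have hz0 : 0 ≤ z := by
    rw [← map_le_map_iff_of_map_sup hJlat hinj, map_zero]
    exact hz.le
  have hsum : J (y + z) ≤ g := by
    rw [map_add]
    exact (add_le_add_right hzg _).trans_eq (add_sub_cancel _ _)
  have hsume : J (y + z) ≤ J e :=
    (map_le_map_iff_of_map_sup hJlat hinj).2 (he _ (add_nonneg hy0 hz0) hsum)
  have : J y + J z ≤ J y := by
    rw [← map_add, hy]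
    exact le_inf hsum hsume
  exact hz.not_ge ((add_le_iff_nonpos_right _).1 this)

theorem complete_of_b_property_in_completion_general
    {E : Type u} {G : Type u}
    [AddCommGroup E] [Lattice E] [CovariantClass E E (· + ·) (· ≤ ·)] [Module ℝ E]
    [AddCommGroup G] [Lattice G] [CovariantClass G G (· + ·) (· ≤ ·)] [Module ℝ G]
    [UniformSpace E] [IsUniformAddGroup E] [T2Space E]
    [UniformSpace G] [IsUniformAddGroup G] [T2Space G]
    -- `E(τ)` and `Ê(τ̂)` are locally solid
    (hlsG : ∀ s ∈ nhds (0 : G), ∃ t ∈ nhds (0 : G), t ⊆ s ∧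
      ∀ x y : G, |x| ≤ |y| → y ∈ t → x ∈ t)
    -- order intervals of `E` are τ-complete
    (hint : ∀ a b : E, IsComplete (Set.Icc a b))
    -- `G` is the topological completion of `E`: `J` is a uniform embedding with
    -- dense (and order dense) range
    (J : E →ₗ[ℝ] G) (hJlat : ∀ x y : E, J (x ⊔ y) = J x ⊔ J y)
    (hJemb : IsUniformInducing J) (hJdenseTop : DenseRange J)
    (hJorderdense : ∀ g : G, 0 < g → ∃ x : E, 0 < J x ∧ J x ≤ g)
    -- `E` has the b-property in `Ê`
    (hb : ∀ (ι : Type u) [Preorder ι] [Nonempty ι] [IsDirected ι (· ≤ ·)]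
      (x : ι → E), (∀ i, 0 ≤ x i) → Monotone x →
      (∃ g : G, ∀ i, J (x i) ≤ g) → ∃ e : E, ∀ i, x i ≤ e) :
    Function.Surjective J := by
  refine surjective_of_forall_nonneg_mem_range fun g hg => ?_
  obtain ⟨e, he⟩ := HasBProperty.exists_forall_le (J := J) hb hJlat hg
  have he0 : 0 ≤ e := he 0 le_rfl (by rwa [map_zero])
  obtain ⟨y, ⟨hy0, -⟩, hy⟩ :=
    exists_mem_Icc_map_eq_sup_inf hlsG hJlat hJemb hJdenseTop he0 (hint 0 e) g
  rw [map_zero, sup_of_le_left hg] at hy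
  exact ⟨y, map_eq_of_map_eq_inf_of_forall_le hJlat hJemb.injective hJorderdense hy0 hy he⟩

/-- A locally solid vector lattice with τ-complete order intervals which has the
b-property in its topological completion is itself complete, i.e. `E = Ê`. -/
theorem complete_of_b_property_in_completion
    {E : Type u} {G : Type u}
    [AddCommGroup E] [Lattice E] [CovariantClass E E (· + ·) (· ≤ ·)] [Module ℝ E]
    [AddCommGroup G] [Lattice G] [CovariantClass G G (· + ·) (· ≤ ·)] [Module ℝ G]
    [UniformSpace E] [IsUniformAddGroup E] [T2Space E]
    [UniformSpace G] [IsUniformAddGroup G] [T2Space G] [CompleteSpace G]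
    -- `E(τ)` and `Ê(τ̂)` are locally solid
    (hls : ∀ s ∈ nhds (0 : E), ∃ t ∈ nhds (0 : E), t ⊆ s ∧
      ∀ x y : E, |x| ≤ |y| → y ∈ t → x ∈ t)
    (hlsG : ∀ s ∈ nhds (0 : G), ∃ t ∈ nhds (0 : G), t ⊆ s ∧
      ∀ x y : G, |x| ≤ |y| → y ∈ t → x ∈ t)
    -- order intervals of `E` are τ-complete
    (hint : ∀ a b : E, IsComplete (Set.Icc a b))
    -- `G` is the topological completion of `E`: `J` is a uniform embedding with
    -- dense (and order dense) range
    (J : E →ₗ[ℝ] G) (hJlat : ∀ x y : E, J (x ⊔ y) = J x ⊔ J y)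
    (hJemb : IsUniformInducing J) (hJdenseTop : DenseRange J)
    (hJorderdense : ∀ g : G, 0 < g → ∃ x : E, 0 < J x ∧ J x ≤ g)
    -- `E` has the b-property in `Ê`
    (hb : ∀ (ι : Type u) [Preorder ι] [Nonempty ι] [IsDirected ι (· ≤ ·)]
      (x : ι → E), (∀ i, 0 ≤ x i) → Monotone x →
      (∃ g : G, ∀ i, J (x i) ≤ g) → ∃ e : E, ∀ i, x i ≤ e) :
    Function.Surjective J :=
  complete_of_b_property_in_completion_general hlsG hint J hJlat hJemb hJdenseTop hJorderdense hb
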